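/- Let A be an invertible n×n matrix over GF(2) with exactly three ones per row, d ∈ GF(2)^n, and let q, w ∈ GF(2)^n be such that ψ(A⁻¹(q ⊕ d)) ≠ ψ(A⁻¹(w ⊕ d)) for some function ψ : GF(2)^n → GF(2). Consider the formula Φ = (φ_q ∨ u) ∧ (φ_w ∨ ¬u) ∧ (linking constraints x_{i,j} = x_j ⊕ d[i]) ∧ (ψ(x) = 1), where φ_q encodes A x = q ⊕ d (via the x_{i,j}) and u is a fresh Boolean variable. Then Φ has exactly one satisfying assignment: if ψ(A⁻¹(q ⊕ d)) = 1 it is the assignment with u = 0 and x = A⁻¹(q ⊕ d); if ψ(A⁻¹(w ⊕ d)) = 1 it is the assignment with u = 1 and x = A⁻¹(w ⊕ d). -/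
import Mathlib


/-- Satisfaction of the formula
`Φ = (φ_q ∨ u) ∧ (φ_w ∨ ¬u) ∧ (x_{i,j} = x_j ⊕ d[i]) ∧ (ψ(x) = 1)`,
where `φ_q` encodes the row constraints `⊕_j x_{i,j} = q[i]` (over the variables
`x_{i,j}` indexed by the entries of `A` equal to `1`), `φ_w` likewise with `w`,
`u` is a fresh Boolean variable, and the linking constraints tie `x_{i,j}` to
`x_j ⊕ d[i]`. -/
def PhiSat (n : ℕ) (A : Matrix (Fin n) (Fin n) (ZMod 2))
    (q w d : Fin n → ZMod 2) (ψ : (Fin n → ZMod 2) → ZMod 2)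
    (u : Bool) (x : Fin n → ZMod 2)
    (y : {p : Fin n × Fin n // A p.1 p.2 = 1} → ZMod 2) : Prop :=
  (u = true ∨ ∀ i, ∑ e ∈ Finset.univ.filter
      (fun e : {p : Fin n × Fin n // A p.1 p.2 = 1} => e.1.1 = i), y e = q i) ∧
  (u = false ∨ ∀ i, ∑ e ∈ Finset.univ.filter
      (fun e : {p : Fin n × Fin n // A p.1 p.2 = 1} => e.1.1 = i), y e = w i) ∧
  (∀ e, y e = x e.1.2 + d e.1.1) ∧
  ψ x = 1

/-- If `ψ(A⁻¹(q ⊕ d)) ≠ ψ(A⁻¹(w ⊕ d))`, then `Φ` has exactly one satisfying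
assignment: with `u = 0` and `x = A⁻¹(q ⊕ d)` when `ψ(A⁻¹(q ⊕ d)) = 1`, and with
`u = 1` and `x = A⁻¹(w ⊕ d)` when `ψ(A⁻¹(w ⊕ d)) = 1`. -/
theorem stmt18 (n : ℕ) (A : Matrix (Fin n) (Fin n) (ZMod 2)) (hA : IsUnit A)
    (hrow : ∀ i, (Finset.univ.filter fun j => A i j = 1).card = 3)
    (q w d : Fin n → ZMod 2) (ψ : (Fin n → ZMod 2) → ZMod 2)
    (hψ : ψ (A⁻¹.mulVec (q + d)) ≠ ψ (A⁻¹.mulVec (w + d))) :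
    (∃! a : Bool × (Fin n → ZMod 2) × ({p : Fin n × Fin n // A p.1 p.2 = 1} → ZMod 2),
      PhiSat n A q w d ψ a.1 a.2.1 a.2.2) ∧
    (ψ (A⁻¹.mulVec (q + d)) = 1 → ∀ u x y, PhiSat n A q w d ψ u x y →
      u = false ∧ x = A⁻¹.mulVec (q + d)) ∧
    (ψ (A⁻¹.mulVec (w + d)) = 1 → ∀ u x y, PhiSat n A q w d ψ u x y →
      u = true ∧ x = A⁻¹.mulVec (w + d)) := by
  have hdet : IsUnit A.det := (Matrix.isUnit_iff_isUnit_det A).mp hA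
  have h01 : ∀ a : ZMod 2, a = 0 ∨ a = 1 := by decide
  have hself : ∀ a : ZMod 2, a + a = 0 := by decide
  set xq := A⁻¹.mulVec (q + d) with hxqdef
  set xw := A⁻¹.mulVec (w + d) with hxwdef
  -- the row sums, given the linking constraints, compute (A x)_i + d_i
  have hsum : ∀ (y : {p : Fin n × Fin n // A p.1 p.2 = 1} → ZMod 2)
      (x : Fin n → ZMod 2), (∀ e, y e = x e.1.2 + d e.1.1) →
      ∀ i, (∑ e ∈ Finset.univ.filter
        (fun e : {p : Fin n × Fin n // A p.1 p.2 = 1} => e.1.1 = i), y e)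
        = A.mulVec x i + d i := by
    intro y x hy i
    calc (∑ e ∈ Finset.univ.filter
          (fun e : {p : Fin n × Fin n // A p.1 p.2 = 1} => e.1.1 = i), y e)
        = ∑ e ∈ Finset.univ.filter
          (fun e : {p : Fin n × Fin n // A p.1 p.2 = 1} => e.1.1 = i),
            (x e.1.2 + d e.1.1) := Finset.sum_congr rfl (fun e _ => hy e)
      _ = ∑ b ∈ Finset.univ.filter (fun b => A i b = 1), (x b + d i) := by
          refine Finset.sum_bij' (fun e _ => e.1.2)
            (fun b hb => ⟨(i, b), (Finset.mem_filter.mp hb).2⟩) ?_ ?_ ?_ ?_ ?_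
          · intro e he
            have h1 := (Finset.mem_filter.mp he).2
            simp only [Finset.mem_filter, Finset.mem_univ, true_and]
            rw [← h1]; exact e.2
          · intro b hb
            simp
          · intro e he
            have h1 := (Finset.mem_filter.mp he).2
            exact Subtype.ext (Prod.ext h1.symm rfl)
          · intro b hb
            rfl
          · intro e he
            have h1 := (Finset.mem_filter.mp he).2
            rw [h1]
      _ = (∑ b ∈ Finset.univ.filter (fun b => A i b = 1), x b)
            + (Finset.univ.filter (fun b => A i b = 1)).card • d i := by
          rw [Finset.sum_add_distrib, Finset.sum_const]
      _ = A.mulVec x i + d i := by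
          rw [hrow i]
          congr 1
          · rw [Matrix.mulVec, dotProduct, Finset.sum_filter]
            refine (Finset.sum_congr rfl (fun b _ => ?_)).symm
            rcases h01 (A i b) with h | h <;> simp [h]
          · show (3 : ℕ) • d i = d i
            rcases h01 (d i) with h | h <;> rw [h] <;> decide
  -- the row constraint is equivalent to x being the corresponding solution
  have hrowiff : ∀ (x : Fin n → ZMod 2) (y : _ → ZMod 2),
      (∀ e, y e = x e.1.2 + d e.1.1) → ∀ v : Fin n → ZMod 2,
      ((∀ i, ∑ e ∈ Finset.univ.filter
        (fun e : {p : Fin n × Fin n // A p.1 p.2 = 1} => e.1.1 = i), y e = v i)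
        ↔ x = A⁻¹.mulVec (v + d)) := by
    intro x y hy v
    constructor
    · intro h
      have hAx : A.mulVec x = v + d := by
        funext i
        have h2 := h i
        rw [hsum y x hy i] at h2
        have := congrArg (· + d i) h2
        simpa [add_assoc, hself] using this
      calc x = A⁻¹.mulVec (A.mulVec x) := by
              rw [Matrix.mulVec_mulVec, Matrix.nonsing_inv_mul A hdet,
                Matrix.one_mulVec]
        _ = A⁻¹.mulVec (v + d) := by rw [hAx]
    · rintro rfl i
      rw [hsum y _ hy i, Matrix.mulVec_mulVec, Matrix.mul_nonsing_inv A hdet,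
        Matrix.one_mulVec]
      show v i + d i + d i = v i
      rw [add_assoc, hself, add_zero]
  -- characterization of satisfying assignments
  have char : ∀ (u : Bool) (x : Fin n → ZMod 2) (y : _ → ZMod 2),
      PhiSat n A q w d ψ u x y ↔
      ((∀ e, y e = x e.1.2 + d e.1.1) ∧ ψ x = 1 ∧
        ((u = false ∧ x = xq) ∨ (u = true ∧ x = xw))) := by
    intro u x y
    unfold PhiSat
    constructor
    · rintro ⟨h1, h2, h3, h4⟩
      refine ⟨h3, h4, ?_⟩
      cases u with
      | false =>
        rcases h1 with h1 | h1
        · exact absurd h1 (by simp)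
        · exact Or.inl ⟨rfl, (hrowiff x y h3 q).mp h1⟩
      | true =>
        rcases h2 with h2 | h2
        · exact absurd h2 (by simp)
        · exact Or.inr ⟨rfl, (hrowiff x y h3 w).mp h2⟩
    · rintro ⟨h3, h4, (⟨rfl, rfl⟩ | ⟨rfl, rfl⟩)⟩
      · exact ⟨Or.inr ((hrowiff _ y h3 q).mpr rfl), Or.inl rfl, h3, h4⟩
      · exact ⟨Or.inl rfl, Or.inr ((hrowiff _ y h3 w).mpr rfl), h3, h4⟩
  have hq1 : ψ xq = 1 → ψ xw ≠ 1 := fun h h' => hψ (h.trans h'.symm)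
  have hw1 : ψ xw = 1 → ψ xq ≠ 1 := fun h h' => hψ (h'.trans h.symm)
  refine ⟨?_, ?_, ?_⟩
  · rcases h01 (ψ xq) with h0 | h1
    · -- then ψ xw = 1, unique solution with u = true
      have hw : ψ xw = 1 := by
        rcases h01 (ψ xw) with h | h
        · exact absurd (h0.trans h.symm) hψ
        · exact h
      refine ⟨(true, xw, fun e => xw e.1.2 + d e.1.1), ?_, ?_⟩
      · exact (char true xw _).mpr ⟨fun e => rfl, hw, Or.inr ⟨rfl, rfl⟩⟩
      · rintro ⟨u, x, y⟩ hs
        rcases (char u x y).mp hs with ⟨h3, h4, ⟨rfl, rfl⟩ | ⟨rfl, rfl⟩⟩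
        · exact absurd h4 (by rw [h0]; decide)
        · exact Prod.ext rfl (Prod.ext rfl (funext fun e => h3 e))
    · refine ⟨(false, xq, fun e => xq e.1.2 + d e.1.1), ?_, ?_⟩
      · exact (char false xq _).mpr ⟨fun e => rfl, h1, Or.inl ⟨rfl, rfl⟩⟩
      · rintro ⟨u, x, y⟩ hs
        rcases (char u x y).mp hs with ⟨h3, h4, ⟨rfl, rfl⟩ | ⟨rfl, rfl⟩⟩
        · exact Prod.ext rfl (Prod.ext rfl (funext fun e => h3 e))
        · exact absurd h4 (hq1 h1)
  · intro h u x y hs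
    rcases (char u x y).mp hs with ⟨h3, h4, ⟨rfl, rfl⟩ | ⟨rfl, rfl⟩⟩
    · exact ⟨rfl, rfl⟩
    · exact absurd h4 (hq1 h)
  · intro h u x y hs
    rcases (char u x y).mp hs with ⟨h3, h4, ⟨rfl, rfl⟩ | ⟨rfl, rfl⟩⟩
    · exact absurd h4 (hw1 h)
    · exact ⟨rfl, rfl⟩
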